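/- arXiv:1509.00925 — 2 statements merged into one kernel-verified Lean document; each statement's English description precedes it below -/
import Mathlib

section
/- Let ν be a rotationally invariant σ-finite Borel measure on ℝ² with ∫ min{1,|y|²} ν(dy) < ∞. Then liminf_{|ξ|→0} (1/|ξ|²) ∫ (1 - cos⟨ξ,y⟩) ν(dy) ≥ (1/4) ∫ |y|² ν(dy). In particular, if ∫|y|²ν(dy) = ∞ then the liminf is infinite. -/
open MeasureTheory Real Filter
open scoped RealInnerProductSpace ENNReal

/-- Rotation of the plane by angle `φ`, acting on `EuclideanSpace ℝ (Fin 2)`. -/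
noncomputable def planeRot (φ : ℝ) (y : EuclideanSpace ℝ (Fin 2)) : EuclideanSpace ℝ (Fin 2) :=
  WithLp.toLp 2 ![Real.cos φ * y 0 - Real.sin φ * y 1, Real.sin φ * y 0 + Real.cos φ * y 1]

lemma aux_sin_div : Tendsto (fun x : ℝ => Real.sin x / x) (nhdsWithin 0 {0}ᶜ) (nhds 1) := by
  have h := Real.hasDerivAt_sin 0
  rw [hasDerivAt_iff_tendsto_slope] at h
  rw [Real.cos_zero] at h
  refine h.congr' ?_
  filter_upwards with x
  simp [slope_def_field]

lemma aux_sin_half_sq (x : ℝ) : Real.sin (x/2) ^ 2 = (1 - Real.cos x) / 2 := by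
  have h1 : Real.cos (2 * (x/2)) = 1 - 2 * Real.sin (x/2) ^ 2 := by
    rw [Real.cos_two_mul']
    have := Real.sin_sq_add_cos_sq (x/2)
    nlinarith
  rw [show 2 * (x/2) = x by ring] at h1
  linarith

lemma aux_cos_div : Tendsto (fun x : ℝ => (1 - Real.cos x) / x ^ 2) (nhdsWithin 0 {0}ᶜ)
    (nhds (1/2)) := by
  have h2 : Tendsto (fun x : ℝ => x / 2) (nhdsWithin 0 {0}ᶜ) (nhdsWithin 0 {0}ᶜ) := by
    rw [tendsto_nhdsWithin_iff]
    constructor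
    · have : Tendsto (fun x : ℝ => x / 2) (nhds 0) (nhds ((0:ℝ)/2)) :=
        (tendsto_id (α := ℝ)).div_const 2
      simpa using this.mono_left nhdsWithin_le_nhds
    · filter_upwards [self_mem_nhdsWithin] with x hx
      simp only [Set.mem_compl_iff, Set.mem_singleton_iff] at hx ⊢
      exact div_ne_zero hx two_ne_zero
  have h3 : Tendsto (fun x : ℝ => (Real.sin (x/2) / (x/2)) ^ 2 / 2) (nhdsWithin 0 {0}ᶜ)
      (nhds (1/2)) := by
    have := ((aux_sin_div.comp h2).pow 2).div_const 2
    simpa using this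
  refine h3.congr' ?_
  filter_upwards [self_mem_nhdsWithin] with x hx
  have hx0 : x ≠ 0 := by simpa using hx
  rw [div_pow, aux_sin_half_sq]
  field_simp

lemma aux_cos_mul_div (u : ℝ) :
    Tendsto (fun t : ℝ => (1 - Real.cos (t * u)) / t ^ 2) (nhdsWithin 0 {0}ᶜ)
      (nhds (u ^ 2 / 2)) := by
  rcases eq_or_ne u 0 with rfl | hu
  · have : Tendsto (fun _ : ℝ => (0:ℝ)) (nhdsWithin 0 {0}ᶜ) (nhds 0) := tendsto_const_nhds
    simpa using this.congr (fun t => by simp)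
  · have hmul : Tendsto (fun t : ℝ => t * u) (nhdsWithin 0 {0}ᶜ) (nhdsWithin 0 {0}ᶜ) := by
      rw [tendsto_nhdsWithin_iff]
      constructor
      · have : Tendsto (fun t : ℝ => t * u) (nhds 0) (nhds (0 * u)) :=
          (tendsto_id (α := ℝ)).mul_const u
        simpa using this.mono_left nhdsWithin_le_nhds
      · filter_upwards [self_mem_nhdsWithin] with t ht
        simp only [Set.mem_compl_iff, Set.mem_singleton_iff] at ht ⊢
        exact mul_ne_zero ht hu
    have h := (aux_cos_div.comp hmul).mul_const (u ^ 2)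
    have heq : (fun t : ℝ => ((1 - Real.cos (t * u)) / (t*u) ^ 2) * u ^ 2) =ᶠ[nhdsWithin 0 {0}ᶜ]
        (fun t : ℝ => (1 - Real.cos (t * u)) / t ^ 2) := by
      filter_upwards [self_mem_nhdsWithin] with t ht
      have ht0 : t ≠ 0 := by simpa using ht
      field_simp
    have : Tendsto (fun t : ℝ => (1 - Real.cos (t * u)) / t ^ 2) (nhdsWithin 0 {0}ᶜ)
        (nhds (1/2 * u ^ 2)) := Tendsto.congr' heq h
    convert this using 2
    ring

lemma planeRot_measurable (φ : ℝ) : Measurable (planeRot φ) := by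
  unfold planeRot
  refine (WithLp.measurable_toLp 2 _).comp ?_
  rw [measurable_pi_iff]
  intro i
  fin_cases i <;> simp [planeRot] <;> fun_prop

lemma euclid_norm_sq (y : EuclideanSpace ℝ (Fin 2)) : ‖y‖ ^ 2 = y 0 ^ 2 + y 1 ^ 2 := by
  rw [EuclideanSpace.norm_eq]
  rw [Real.sq_sqrt (by positivity)]
  simp [Fin.sum_univ_two, sq_abs]

lemma euclid_inner (ξ y : EuclideanSpace ℝ (Fin 2)) : ⟪ξ, y⟫ = ξ 0 * y 0 + ξ 1 * y 1 := by
  simp [PiLp.inner_apply, RCLike.inner_apply, Fin.sum_univ_two]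
  ring

lemma rot_reduce (ν : Measure (EuclideanSpace ℝ (Fin 2)))
    (hrot : ∀ φ : ℝ, Measure.map (planeRot φ) ν = ν)
    (ξ : EuclideanSpace ℝ (Fin 2)) (hξ : ξ ≠ 0) :
    ∫⁻ y, ENNReal.ofReal (1 - Real.cos ⟪ξ, y⟫) ∂ν
      = ∫⁻ y, ENNReal.ofReal (1 - Real.cos (‖ξ‖ * y 0)) ∂ν := by
  set z : ℂ := ⟨ξ 0, ξ 1⟩ with hz
  have habs : ‖z‖ = ‖ξ‖ := by
    rw [Complex.norm_def, Complex.normSq_mk, EuclideanSpace.norm_eq]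
    simp [Fin.sum_univ_two, sq_abs, sq]
  have hz0 : z ≠ 0 := by
    intro h
    apply hξ
    have : ‖z‖ = 0 := by simp [h]
    rw [habs] at this
    exact norm_eq_zero.mp this
  have hcos : Real.cos z.arg = ξ 0 / ‖ξ‖ := by rw [Complex.cos_arg hz0, habs]
  have hsin : Real.sin z.arg = ξ 1 / ‖ξ‖ := by rw [Complex.sin_arg, habs]
  have hnorm : ‖ξ‖ ≠ 0 := norm_ne_zero_iff.mpr hξ
  have hmeas : Measurable fun y : EuclideanSpace ℝ (Fin 2) =>
      ENNReal.ofReal (1 - Real.cos (‖ξ‖ * y 0)) := by fun_prop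
  calc ∫⁻ y, ENNReal.ofReal (1 - Real.cos ⟪ξ, y⟫) ∂ν
      = ∫⁻ y, ENNReal.ofReal (1 - Real.cos (‖ξ‖ * (planeRot (-z.arg) y) 0)) ∂ν := by
        refine lintegral_congr fun y => ?_
        congr 2
        simp only [planeRot, Matrix.cons_val_zero, Real.cos_neg, Real.sin_neg,
          euclid_inner, hcos, hsin]
        field_simp
        rw [sub_neg_eq_add]
    _ = ∫⁻ y, ENNReal.ofReal (1 - Real.cos (‖ξ‖ * y 0)) ∂ν := by
        conv_rhs => rw [← hrot (-z.arg)]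
        rw [lintegral_map hmeas (planeRot_measurable _)]

lemma rot_coord (ν : Measure (EuclideanSpace ℝ (Fin 2)))
    (hrot : ∀ φ : ℝ, Measure.map (planeRot φ) ν = ν) :
    ∫⁻ y, ENNReal.ofReal (y 0 ^ 2) ∂ν = ∫⁻ y, ENNReal.ofReal (y 1 ^ 2) ∂ν := by
  have hmeas : Measurable fun y : EuclideanSpace ℝ (Fin 2) =>
      ENNReal.ofReal (y 0 ^ 2) := by fun_prop
  conv_lhs => rw [← hrot (Real.pi/2)]
  rw [lintegral_map hmeas (planeRot_measurable _)]
  refine lintegral_congr fun y => ?_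
  congr 1
  simp [planeRot, neg_sq]

theorem liminf_symbol_ge_quarter_second_moment
    (ν : Measure (EuclideanSpace ℝ (Fin 2))) [SigmaFinite ν]
    (hrot : ∀ φ : ℝ, Measure.map (planeRot φ) ν = ν)
    (hfin : ∫⁻ y, ENNReal.ofReal (min 1 (‖y‖ ^ 2)) ∂ν ≠ ⊤) :
    (1 / 4) * ∫⁻ y, ENNReal.ofReal (‖y‖ ^ 2) ∂ν
      ≤ Filter.liminf
          (fun ξ : EuclideanSpace ℝ (Fin 2) =>
            (∫⁻ y, ENNReal.ofReal (1 - Real.cos ⟪ξ, y⟫) ∂ν) / ENNReal.ofReal (‖ξ‖ ^ 2))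
          (nhdsWithin 0 {0}ᶜ) := by
  set I0 : ℝ≥0∞ := ∫⁻ y, ENNReal.ofReal (y 0 ^ 2) ∂ν with hI0
  have hnormint : ∫⁻ y, ENNReal.ofReal (‖y‖ ^ 2) ∂ν = 2 * I0 := by
    have : ∀ y : EuclideanSpace ℝ (Fin 2),
        ENNReal.ofReal (‖y‖ ^ 2) = ENNReal.ofReal (y 0 ^ 2) + ENNReal.ofReal (y 1 ^ 2) := by
      intro y
      rw [euclid_norm_sq, ENNReal.ofReal_add (by positivity) (by positivity)]
    rw [lintegral_congr this, lintegral_add_left (by fun_prop), ← rot_coord ν hrot, two_mul]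
  rw [hnormint, ← mul_assoc]
  have h14 : (1/4 : ℝ≥0∞) * 2 = 1/2 := by
    rw [one_div, one_div, show (4:ℝ≥0∞) = 2*2 by norm_num,
      ENNReal.mul_inv (by norm_num) (by norm_num), mul_assoc,
      ENNReal.inv_mul_cancel (by norm_num) (by norm_num), mul_one]
  rw [h14]
  rw [le_liminf_iff]
  intro b hb
  by_contra hcon
  rw [not_eventually] at hcon
  have hfreq : ∃ᶠ ξ in nhdsWithin (0 : EuclideanSpace ℝ (Fin 2)) {0}ᶜ,
      (∫⁻ y, ENNReal.ofReal (1 - Real.cos ⟪ξ, y⟫) ∂ν) / ENNReal.ofReal (‖ξ‖ ^ 2) ≤ b ∧ ξ ≠ 0 := by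
    refine (hcon.mono fun ξ hξ => not_lt.mp hξ).and_eventually ?_
    filter_upwards [self_mem_nhdsWithin] with ξ hξ
    simpa using hξ
  obtain ⟨ξs, htend, hprop⟩ := Filter.exists_seq_forall_of_frequently hfreq
  have httend : Tendsto (fun n => ‖ξs n‖) atTop (nhdsWithin (0:ℝ) {0}ᶜ) := by
    rw [tendsto_nhdsWithin_iff]
    constructor
    · have h0 : Tendsto ξs atTop (nhds (0 : EuclideanSpace ℝ (Fin 2))) :=
        htend.mono_right nhdsWithin_le_nhds
      simpa [Function.comp_def] using (continuous_norm.tendsto (0 : EuclideanSpace ℝ (Fin 2))).comp h0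
    · filter_upwards with n
      simp only [Set.mem_compl_iff, Set.mem_singleton_iff]
      exact norm_ne_zero_iff.mpr (hprop n).2
  have key : ∀ n, (∫⁻ y, ENNReal.ofReal (1 - Real.cos ⟪ξs n, y⟫) ∂ν)
        / ENNReal.ofReal (‖ξs n‖ ^ 2)
      = ∫⁻ y, ENNReal.ofReal ((1 - Real.cos (‖ξs n‖ * y 0)) / ‖ξs n‖ ^ 2) ∂ν := by
    intro n
    have hn0 : ξs n ≠ 0 := (hprop n).2
    have hnn : ‖ξs n‖ ≠ 0 := norm_ne_zero_iff.mpr hn0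
    have ht2 : (0:ℝ) < ‖ξs n‖ ^ 2 := by positivity
    rw [rot_reduce ν hrot _ hn0, div_eq_mul_inv, ← lintegral_mul_const _ (by fun_prop)]
    refine lintegral_congr fun y => ?_
    rw [ENNReal.ofReal_div_of_pos ht2, div_eq_mul_inv]
  have hmeasn : ∀ n, Measurable fun y : EuclideanSpace ℝ (Fin 2) =>
      ENNReal.ofReal ((1 - Real.cos (‖ξs n‖ * y 0)) / ‖ξs n‖ ^ 2) := by
    intro n; fun_prop
  have hfat := lintegral_liminf_le (μ := ν) (u := atTop) hmeasn
  have hpt : ∀ y : EuclideanSpace ℝ (Fin 2),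
      Filter.liminf (fun n => ENNReal.ofReal ((1 - Real.cos (‖ξs n‖ * y 0)) / ‖ξs n‖ ^ 2)) atTop
        = ENNReal.ofReal (y 0 ^ 2 / 2) := by
    intro y
    have h1 : Tendsto (fun n => (1 - Real.cos (‖ξs n‖ * y 0)) / ‖ξs n‖ ^ 2) atTop
        (nhds (y 0 ^ 2 / 2)) := (aux_cos_mul_div (y 0)).comp httend
    exact ((ENNReal.continuous_ofReal.tendsto _).comp h1).liminf_eq
  have hhalf : ∫⁻ y, ENNReal.ofReal (y 0 ^ 2 / 2) ∂ν = 1/2 * I0 := by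
    have : ∀ y : EuclideanSpace ℝ (Fin 2),
        ENNReal.ofReal (y 0 ^ 2 / 2) = ENNReal.ofReal (y 0 ^ 2) * 2⁻¹ := by
      intro y
      rw [ENNReal.ofReal_div_of_pos two_pos, div_eq_mul_inv]
      norm_num
    rw [lintegral_congr this, lintegral_mul_const _ (by fun_prop), one_div, mul_comm]
  have hle : (1/2 : ℝ≥0∞) * I0 ≤ b := by
    rw [← hhalf]
    calc ∫⁻ y, ENNReal.ofReal (y 0 ^ 2 / 2) ∂ν
        = ∫⁻ y, Filter.liminf
            (fun n => ENNReal.ofReal ((1 - Real.cos (‖ξs n‖ * y 0)) / ‖ξs n‖ ^ 2)) atTop ∂ν := by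
          exact (lintegral_congr hpt).symm
      _ ≤ Filter.liminf
            (fun n => ∫⁻ y, ENNReal.ofReal ((1 - Real.cos (‖ξs n‖ * y 0)) / ‖ξs n‖ ^ 2) ∂ν)
            atTop := hfat
      _ ≤ b := by
          refine liminf_le_of_frequently_le' ?_
          refine Filter.Frequently.of_forall fun n => ?_
          rw [← key n]
          exact (hprop n).1
  exact absurd (lt_of_lt_of_le hb hle) (lt_irrefl b)
end

section
/- Let M : (0,∞) × (0,∞) → [0,∞) be such that for each fixed ρ, u ↦ M(ρ,u) is of the form M(ρ,u) = μ(⋃_{n≥0}(2nρ+u, 2(n+1)ρ−u]) for a σ-finite measure μ on (0,∞). Then for every ρ > 0: ∫₀^ρ u·M(ρ,u) du ≤ 5 ∫₀^{ρ/2} u·M(ρ,u) du. -/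
open MeasureTheory Real
open scoped ENNReal

lemma lint_id_Ioc (a b : ℝ) (h0 : 0 ≤ a) (hab : a ≤ b) :
    ∫⁻ u in Set.Ioc a b, ENNReal.ofReal u
      = ENNReal.ofReal ((b ^ 2 - a ^ 2) / 2) := by
  rw [← MeasureTheory.ofReal_integral_eq_lintegral_ofReal]
  · rw [← intervalIntegral.integral_of_le hab, integral_id]
  · exact (intervalIntegrable_iff_integrableOn_Ioc_of_le hab).mp
      intervalIntegral.intervalIntegrable_id
  · refine (ae_restrict_iff' measurableSet_Ioc).mpr (Filter.Eventually.of_forall ?_)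
    intro x hx
    exact le_trans h0 hx.1.le

theorem block_tail_halving_estimate
    (μ : Measure ℝ) [SigmaFinite μ]
    (M : ℝ → ℝ → ℝ≥0∞)
    (hM : ∀ ρ u, M ρ u = μ (⋃ n : ℕ, Set.Ioc (2 * n * ρ + u) (2 * (n + 1) * ρ - u))) :
    ∀ ρ : ℝ, 0 < ρ →
      ∫⁻ u in Set.Ioc (0 : ℝ) ρ, ENNReal.ofReal u * M ρ u
        ≤ 5 * ∫⁻ u in Set.Ioc (0 : ℝ) (ρ / 2), ENNReal.ofReal u * M ρ u := by
  intro ρ hρ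
  -- antitonicity of M ρ in u
  have hmono : ∀ u v : ℝ, u ≤ v → M ρ v ≤ M ρ u := by
    intro u v huv
    rw [hM, hM]
    exact measure_mono (Set.iUnion_mono fun n =>
      Set.Ioc_subset_Ioc (by linarith) (by linarith))
  set c := M ρ (ρ / 2) with hc
  set I₁ := ∫⁻ u in Set.Ioc (0 : ℝ) (ρ / 2), ENNReal.ofReal u * M ρ u with hI₁
  -- split
  have hsplit : Set.Ioc (0 : ℝ) ρ = Set.Ioc (0 : ℝ) (ρ / 2) ∪ Set.Ioc (ρ / 2) ρ :=
    (Set.Ioc_union_Ioc_eq_Ioc (by linarith) (by linarith)).symm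
  have hdisj : Disjoint (Set.Ioc (0 : ℝ) (ρ / 2)) (Set.Ioc (ρ / 2) ρ) :=
    Set.Ioc_disjoint_Ioc_of_le le_rfl
  have hsum : ∫⁻ u in Set.Ioc (0 : ℝ) ρ, ENNReal.ofReal u * M ρ u
      = I₁ + ∫⁻ u in Set.Ioc (ρ / 2) ρ, ENNReal.ofReal u * M ρ u := by
    rw [hsplit, lintegral_union measurableSet_Ioc hdisj]
  -- tail bound
  have htail : ∫⁻ u in Set.Ioc (ρ / 2) ρ, ENNReal.ofReal u * M ρ u
      ≤ ENNReal.ofReal (3 * (ρ ^ 2 / 8)) * c := by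
    calc ∫⁻ u in Set.Ioc (ρ / 2) ρ, ENNReal.ofReal u * M ρ u
        ≤ ∫⁻ u in Set.Ioc (ρ / 2) ρ, ENNReal.ofReal u * c := by
          refine setLIntegral_mono' measurableSet_Ioc fun x hx => ?_
          exact mul_le_mul_right (hmono _ _ hx.1.le) _
      _ = (∫⁻ u in Set.Ioc (ρ / 2) ρ, ENNReal.ofReal u) * c :=
          lintegral_mul_const c (by fun_prop)
      _ = ENNReal.ofReal ((ρ ^ 2 - (ρ / 2) ^ 2) / 2) * c := by
          rw [lint_id_Ioc _ _ (by linarith) (by linarith)]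
      _ = ENNReal.ofReal (3 * (ρ ^ 2 / 8)) * c := by ring_nf
  -- lower bound for I₁
  have hlow : ENNReal.ofReal (ρ ^ 2 / 8) * c ≤ I₁ := by
    calc ENNReal.ofReal (ρ ^ 2 / 8) * c
        = (∫⁻ u in Set.Ioc (0 : ℝ) (ρ / 2), ENNReal.ofReal u) * c := by
          rw [lint_id_Ioc _ _ le_rfl (by linarith)]
          ring_nf
      _ = ∫⁻ u in Set.Ioc (0 : ℝ) (ρ / 2), ENNReal.ofReal u * c :=
          (lintegral_mul_const c (by fun_prop)).symm
      _ ≤ I₁ := by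
          refine setLIntegral_mono' measurableSet_Ioc fun x hx => ?_
          exact mul_le_mul_right (hmono _ _ hx.2) _
  have h3 : ENNReal.ofReal (3 * (ρ ^ 2 / 8)) * c
      = 3 * (ENNReal.ofReal (ρ ^ 2 / 8) * c) := by
    rw [ENNReal.ofReal_mul (by norm_num)]
    norm_num [mul_assoc]
  calc ∫⁻ u in Set.Ioc (0 : ℝ) ρ, ENNReal.ofReal u * M ρ u
      = I₁ + ∫⁻ u in Set.Ioc (ρ / 2) ρ, ENNReal.ofReal u * M ρ u := hsum
    _ ≤ I₁ + 3 * (ENNReal.ofReal (ρ ^ 2 / 8) * c) := by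
        rw [← h3]; exact add_le_add_right htail _
    _ ≤ I₁ + 3 * I₁ := add_le_add_right (mul_le_mul_right hlow 3) _
    _ = 4 * I₁ := by ring
    _ ≤ 5 * I₁ := mul_le_mul_left (by norm_num) _
end
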